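/- arXiv:2508.19400 — 3 statements merged into one kernel-verified Lean document; each statement's English description precedes it below -/
import Mathlib

section
/- Let f : ℝ^D → ℝ be twice continuously differentiable with γ_H-Lipschitz Hessian, let X be a finite set of points in ℝ^D, and let xᵢ ∈ X. Then the gradient ∇f(xᵢ) belongs to the polytopic gradient set 𝒢⁽ⁱ⁾ = { g ∈ ℝ^D : for every xⱼ ∈ X \ {xᵢ}, both ⟨g, uᵢⱼ⟩ ≤ g̃ᵢⱼ + (1/2)·μᵢⱼ·‖H(xᵢ)‖ + (1/6)·μᵢⱼ²·γ_H and −⟨g, uᵢⱼ⟩ ≤ −g̃ᵢⱼ + (1/2)·μᵢⱼ·‖H(xᵢ)‖ + (1/6)·μᵢⱼ²·γ_H }. -/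
/-!
Along the segment from `xᵢ` to `xⱼ`, a second-order Taylor expansion with a Lipschitz second
derivative gives `|f xⱼ - f xᵢ - ⟪∇f xᵢ, xⱼ - xᵢ⟫| ≤ ½ ‖H xᵢ‖ μᵢⱼ² + ⅙ γ_H μᵢⱼ³`; dividing by
`μᵢⱼ` yields both half-space constraints. The cubic remainder comes from integrating the bound
`|φ''(s) - φ''(0)| ≤ γ_H μᵢⱼ³ s` twice, by the fencing form of the mean value inequality.
-/

variable {F : Type*} [NormedAddCommGroup F] [NormedSpace ℝ F]

theorem norm_le_of_norm_deriv_le_mul_pow {ψ ψ' : ℝ → F} {C t : ℝ} (n : ℕ) (hψ₀ : ψ 0 = 0)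
    (hψ : ∀ s, HasDerivAt ψ (ψ' s) s) (hbound : ∀ s, 0 ≤ s → ‖ψ' s‖ ≤ C * s ^ n) (ht : 0 ≤ t) :
    ‖ψ t‖ ≤ C * t ^ (n + 1) / (n + 1) := by
  have hB : ∀ s, HasDerivAt (fun s => C * s ^ (n + 1) / (n + 1)) (C * s ^ n) s := fun s => by
    refine (((hasDerivAt_pow (n + 1) s).const_mul C).div_const ((n : ℝ) + 1)).congr_deriv ?_
    push_cast
    field_simp
  refine image_norm_le_of_norm_deriv_right_le_deriv_boundary
    (fun s _ => (hψ s).continuousAt.continuousWithinAt) (fun s _ => (hψ s).hasDerivWithinAt)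
    (by simp [hψ₀]) hB (fun s hs => hbound s hs.1) (Set.right_mem_Icc.2 ht)

theorem norm_taylor_two_remainder_le {φ φ' φ'' : ℝ → F} {L t : ℝ}
    (hφ : ∀ s, HasDerivAt φ (φ' s) s) (hφ' : ∀ s, HasDerivAt φ' (φ'' s) s)
    (hφ'' : ∀ s, 0 ≤ s → ‖φ'' s - φ'' 0‖ ≤ L * s) (ht : 0 ≤ t) :
    ‖φ t - φ 0 - t • φ' 0 - (t ^ 2 / 2) • φ'' 0‖ ≤ L * t ^ 3 / 6 := by
  have hfirst : ∀ s, 0 ≤ s → ‖φ' s - φ' 0 - s • φ'' 0‖ ≤ L / 2 * s ^ 2 := fun s hs => by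
    have := norm_le_of_norm_deriv_le_mul_pow (ψ := fun s => φ' s - φ' 0 - s • φ'' 0) 1
      (by simp) (fun s => ((hφ' s).sub_const _).sub ((hasDerivAt_id s).smul_const (φ'' 0)))
      (by simpa using hφ'') hs
    linarith
  have := norm_le_of_norm_deriv_le_mul_pow
    (ψ := fun s => φ s - φ 0 - s • φ' 0 - (s ^ 2 / 2) • φ'' 0) 2 (by simp)
    (fun s => by
      refine ((((hφ s).sub_const (φ 0)).sub ((hasDerivAt_id s).smul_const (φ' 0))).sub
        (((hasDerivAt_pow 2 s).div_const 2).smul_const (φ'' 0))).congr_deriv ?_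
      simp)
    hfirst ht
  convert this using 1
  ring

section Taylor

variable {E : Type*} [NormedAddCommGroup E] [NormedSpace ℝ E] {f : E → F} {γ : ℝ}

theorem ContinuousMultilinearMap.norm_apply_diag_two_le
    (A : ContinuousMultilinearMap ℝ (fun _ : Fin 2 => E) F) (v : E) :
    ‖A ![v, v]‖ ≤ ‖A‖ * ‖v‖ ^ 2 :=
  A.le_opNorm_mul_pow_of_le <|
    (pi_norm_le_iff_of_nonneg (norm_nonneg v)).2 <| by simp [Fin.forall_fin_two]

theorem hasDerivAt_comp_add_smul {g : E → F} {x v : E} {t : ℝ}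
    (hg : DifferentiableAt ℝ g (x + t • v)) :
    HasDerivAt (fun s : ℝ => g (x + s • v)) (fderiv ℝ g (x + t • v) v) t := by
  have hline : HasDerivAt (fun s : ℝ => x + s • v) v t := by
    simpa using ((hasDerivAt_id t).smul_const v).const_add x
  exact hg.hasFDerivAt.comp_hasDerivAt t hline

theorem ContDiff.hasDerivAt_fderiv_comp_add_smul (hf : ContDiff ℝ 2 f) (x v : E) (t : ℝ) :
    HasDerivAt (fun s : ℝ => fderiv ℝ f (x + s • v) v)
      (iteratedFDeriv ℝ 2 f (x + t • v) ![v, v]) t := by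
  have h := (hasDerivAt_comp_add_smul
    ((hf.fderiv_right (m := 1) le_rfl).differentiable one_ne_zero (x + t • v))).clm_apply
    (hasDerivAt_const t v)
  simpa [iteratedFDeriv_two_apply] using h

theorem norm_taylor_two_remainder_le_of_lipschitz (hf : ContDiff ℝ 2 f)
    (hLip : ∀ x₁ x₂ : E,
      ‖iteratedFDeriv ℝ 2 f x₁ - iteratedFDeriv ℝ 2 f x₂‖ ≤ γ * ‖x₁ - x₂‖) (x v : E) :
    ‖f (x + v) - f x - fderiv ℝ f x v - (1 / 2 : ℝ) • iteratedFDeriv ℝ 2 f x ![v, v]‖ ≤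
      γ * ‖v‖ ^ 3 / 6 := by
  have hφ'' : ∀ s : ℝ, 0 ≤ s → ‖iteratedFDeriv ℝ 2 f (x + s • v) ![v, v] -
      iteratedFDeriv ℝ 2 f (x + (0 : ℝ) • v) ![v, v]‖ ≤ γ * ‖v‖ ^ 3 * s := fun s hs => by
    rw [← sub_apply]
    refine ((iteratedFDeriv ℝ 2 f (x + s • v) - iteratedFDeriv ℝ 2 f (x + (0 : ℝ) • v))
      |>.norm_apply_diag_two_le v).trans ?_
    calc _ ≤ γ * ‖x + s • v - (x + (0 : ℝ) • v)‖ * ‖v‖ ^ 2 := by gcongr; exact hLip _ _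
      _ = γ * ‖v‖ ^ 3 * s := by
        rw [zero_smul, add_zero, add_sub_cancel_left, norm_smul, Real.norm_of_nonneg hs]
        ring
  have h := norm_taylor_two_remainder_le
    (fun t => hasDerivAt_comp_add_smul ((hf.differentiable two_ne_zero) (x + t • v)))
    (hf.hasDerivAt_fderiv_comp_add_smul x v) hφ'' zero_le_one
  simpa using h

theorem norm_sub_sub_fderiv_le_of_lipschitz (hf : ContDiff ℝ 2 f)
    (hLip : ∀ x₁ x₂ : E,
      ‖iteratedFDeriv ℝ 2 f x₁ - iteratedFDeriv ℝ 2 f x₂‖ ≤ γ * ‖x₁ - x₂‖) (x v : E) :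
    ‖f (x + v) - f x - fderiv ℝ f x v‖ ≤
      ‖iteratedFDeriv ℝ 2 f x‖ * ‖v‖ ^ 2 / 2 + γ * ‖v‖ ^ 3 / 6 := by
  have hsecond : ‖(1 / 2 : ℝ) • iteratedFDeriv ℝ 2 f x ![v, v]‖ ≤
      ‖iteratedFDeriv ℝ 2 f x‖ * ‖v‖ ^ 2 / 2 := by
    rw [norm_smul, Real.norm_of_nonneg (by norm_num)]
    linarith [(iteratedFDeriv ℝ 2 f x).norm_apply_diag_two_le v]
  calc _ ≤ ‖(1 / 2 : ℝ) • iteratedFDeriv ℝ 2 f x ![v, v]‖ +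
        ‖f (x + v) - f x - fderiv ℝ f x v - (1 / 2 : ℝ) • iteratedFDeriv ℝ 2 f x ![v, v]‖ :=
        norm_le_insert' _ _
    _ ≤ _ := add_le_add hsecond (norm_taylor_two_remainder_le_of_lipschitz hf hLip x v)

end Taylor

theorem abs_inner_gradient_sub_slope_le {E : Type*} [NormedAddCommGroup E]
    [InnerProductSpace ℝ E] [CompleteSpace E] {f : E → ℝ} {γ : ℝ} (hf : ContDiff ℝ 2 f)
    (hLip : ∀ x₁ x₂ : E,
      ‖iteratedFDeriv ℝ 2 f x₁ - iteratedFDeriv ℝ 2 f x₂‖ ≤ γ * ‖x₁ - x₂‖) (x v : E) :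
    |inner ℝ (gradient f x) (‖v‖⁻¹ • v) - (f (x + v) - f x) / ‖v‖| ≤
      ‖v‖ * ‖iteratedFDeriv ℝ 2 f x‖ / 2 + ‖v‖ ^ 2 * γ / 6 := by
  rcases eq_or_ne v 0 with rfl | hv
  · simp
  have hμ : 0 < ‖v‖ := norm_pos_iff.2 hv
  have h := norm_sub_sub_fderiv_le_of_lipschitz hf hLip x v
  rw [Real.norm_eq_abs, abs_sub_comm] at h
  rw [real_inner_smul_right, inner_gradient_left, inv_mul_eq_div, ← sub_div, abs_div,
    abs_of_pos hμ, div_le_iff₀ hμ]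
  exact h.trans_eq (by ring)

theorem sage_gradient_in_polytope_general
    {D : ℕ}
    (f : EuclideanSpace ℝ (Fin D) → ℝ)
    (hf : ContDiff ℝ 2 f)
    (γH : ℝ)
    (hLip : ∀ x₁ x₂ : EuclideanSpace ℝ (Fin D),
      ‖iteratedFDeriv ℝ 2 f x₁ - iteratedFDeriv ℝ 2 f x₂‖ ≤ γH * ‖x₁ - x₂‖)
    (X : Finset (EuclideanSpace ℝ (Fin D)))
    (xi : EuclideanSpace ℝ (Fin D)) :
    gradient f xi ∈
      { g : EuclideanSpace ℝ (Fin D) |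
        ∀ xj ∈ X, xj ≠ xi →
          (inner ℝ g ((‖xj - xi‖)⁻¹ • (xj - xi)) : ℝ) ≤
              (f xj - f xi) / ‖xj - xi‖ +
                (1 / 2) * ‖xj - xi‖ * ‖iteratedFDeriv ℝ 2 f xi‖ +
                (1 / 6) * ‖xj - xi‖ ^ 2 * γH ∧
          -(inner ℝ g ((‖xj - xi‖)⁻¹ • (xj - xi)) : ℝ) ≤
              -((f xj - f xi) / ‖xj - xi‖) +
                (1 / 2) * ‖xj - xi‖ * ‖iteratedFDeriv ℝ 2 f xi‖ +
                (1 / 6) * ‖xj - xi‖ ^ 2 * γH } := by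
  intro xj _ _
  have h := abs_inner_gradient_sub_slope_le hf hLip xi (xj - xi)
  rw [add_sub_cancel, abs_le] at h
  constructor <;> linarith [h.1, h.2]

/-- The true gradient belongs to the polytopic gradient set
(Theorem 1 of the paper, noiseless case). -/
theorem sage_gradient_in_polytope
    {D : ℕ} (hD : 1 ≤ D)
    (f : EuclideanSpace ℝ (Fin D) → ℝ)
    (hf : ContDiff ℝ 2 f)
    (γH : ℝ) (hγH : 0 ≤ γH)
    (hLip : ∀ x₁ x₂ : EuclideanSpace ℝ (Fin D),
      ‖iteratedFDeriv ℝ 2 f x₁ - iteratedFDeriv ℝ 2 f x₂‖ ≤ γH * ‖x₁ - x₂‖)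
    (X : Finset (EuclideanSpace ℝ (Fin D)))
    (xi : EuclideanSpace ℝ (Fin D)) (hxi : xi ∈ X) :
    gradient f xi ∈
      { g : EuclideanSpace ℝ (Fin D) |
        ∀ xj ∈ X, xj ≠ xi →
          (inner ℝ g ((‖xj - xi‖)⁻¹ • (xj - xi)) : ℝ) ≤
              (f xj - f xi) / ‖xj - xi‖ +
                (1 / 2) * ‖xj - xi‖ * ‖iteratedFDeriv ℝ 2 f xi‖ +
                (1 / 6) * ‖xj - xi‖ ^ 2 * γH ∧
          -(inner ℝ g ((‖xj - xi‖)⁻¹ • (xj - xi)) : ℝ) ≤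
              -((f xj - f xi) / ‖xj - xi‖) +
                (1 / 2) * ‖xj - xi‖ * ‖iteratedFDeriv ℝ 2 f xi‖ +
                (1 / 6) * ‖xj - xi‖ ^ 2 * γH } :=
  sage_gradient_in_polytope_general f hf γH hLip X xi
end

section
/- Let f : ℝ^D → ℝ be twice continuously differentiable with γ_H-Lipschitz Hessian, let X be a finite set of points in ℝ^D containing xᵢ, with noiseless function values. Then the feasible region of the gradient-estimation linear program is nonempty: there exist g ∈ ℝ^D, h ≥ 0 and γ ≥ 0 (namely g = ∇f(xᵢ), h = ‖H(xᵢ)‖, γ = γ_H) such that for every xⱼ ∈ X \ {xᵢ}, ⟨g, uᵢⱼ⟩ − (1/2)·μᵢⱼ·h − (1/6)·μᵢⱼ²·γ ≤ g̃ᵢⱼ and −⟨g, uᵢⱼ⟩ − (1/2)·μᵢⱼ·h − (1/6)·μᵢⱼ²·γ ≤ −g̃ᵢⱼ. -/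
/-! Along the segment `t ↦ xᵢ + t • (xⱼ - xᵢ)`, the Lipschitz Hessian bounds the second derivative
of `f` by `‖H(xᵢ)‖ μ² + γ_H μ³ t`. Integrating this bound twice gives the first-order Taylor
estimate `|f xⱼ - f xᵢ - ⟪∇f xᵢ, xⱼ - xᵢ⟫| ≤ ‖H(xᵢ)‖ μ² / 2 + γ_H μ³ / 6`, and dividing by `μ`
yields both constraints of the linear program. -/

open Set

section OneVariable

variable {E : Type*} [NormedAddCommGroup E] [NormedSpace ℝ E]

theorem norm_sub_le_sub_of_norm_deriv_le {φ φ' : ℝ → E} {B B' : ℝ → ℝ} {a b : ℝ}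
    (hab : a ≤ b) (hφ : ∀ t, HasDerivAt φ (φ' t) t) (hB : ∀ t, HasDerivAt B (B' t) t)
    (bound : ∀ t ∈ Ico a b, ‖φ' t‖ ≤ B' t) : ‖φ b - φ a‖ ≤ B b - B a := by
  refine image_norm_le_of_norm_deriv_right_le_deriv_boundary (f := fun t => φ t - φ a)
    (B := fun t => B t - B a) ?_ (fun t _ => ((hφ t).sub_const _).hasDerivWithinAt) (by simp)
    (fun t => (hB t).sub_const _) bound (right_mem_Icc.2 hab)
  exact fun t _ => ((hφ t).continuousAt.sub continuousAt_const).continuousWithinAt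

theorem norm_sub_sub_deriv_le_of_norm_deriv2_le {φ φ' φ'' : ℝ → E} {a b : ℝ}
    (hφ : ∀ t, HasDerivAt φ (φ' t) t) (hφ' : ∀ t, HasDerivAt φ' (φ'' t) t)
    (bound : ∀ t ∈ Icc (0 : ℝ) 1, ‖φ'' t‖ ≤ a + b * t) :
    ‖φ 1 - φ 0 - φ' 0‖ ≤ a / 2 + b / 6 := by
  have hφ'_growth : ∀ t ∈ Icc (0 : ℝ) 1, ‖φ' t - φ' 0‖ ≤ a * t + b * t ^ 2 / 2 := by
    intro t ht
    have hB : ∀ s, HasDerivAt (fun s => a * s + b * s ^ 2 / 2) (a + b * s) s := fun s =>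
      (((hasDerivAt_id s).const_mul a).add
        (((hasDerivAt_pow 2 s).const_mul b).div_const 2)).congr_deriv (by norm_num; ring)
    simpa using norm_sub_le_sub_of_norm_deriv_le ht.1 hφ' hB
      fun s hs => bound s ⟨hs.1, hs.2.le.trans ht.2⟩
  have hψ : ∀ t, HasDerivAt (fun t => φ t - t • φ' 0) (φ' t - φ' 0) t := fun t => by
    simpa only [one_smul] using (hφ t).fun_sub ((hasDerivAt_id' t).smul_const (φ' 0))
  have hB : ∀ s, HasDerivAt (fun s => a * s ^ 2 / 2 + b * s ^ 3 / 6) (a * s + b * s ^ 2 / 2) s :=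
    fun s => ((((hasDerivAt_pow 2 s).const_mul a).div_const 2).add
      (((hasDerivAt_pow 3 s).const_mul b).div_const 6)).congr_deriv (by norm_num; ring)
  simpa [sub_right_comm] using norm_sub_le_sub_of_norm_deriv_le zero_le_one hψ hB
    fun t ht => hφ'_growth t (Ico_subset_Icc_self ht)

end OneVariable

section Taylor

variable {E F : Type*} [NormedAddCommGroup E] [NormedSpace ℝ E]
  [NormedAddCommGroup F] [NormedSpace ℝ F]

theorem norm_sub_sub_fderiv_le_of_lipschitz_iteratedFDeriv_two {f : E → F}
    (hf : ContDiff ℝ 2 f) {x y : E} {γ : ℝ}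
    (hLip : ∀ z, ‖iteratedFDeriv ℝ 2 f z - iteratedFDeriv ℝ 2 f x‖ ≤ γ * ‖z - x‖) :
    ‖f y - f x - fderiv ℝ f x (y - x)‖ ≤
      ‖iteratedFDeriv ℝ 2 f x‖ * ‖y - x‖ ^ 2 / 2 + γ * ‖y - x‖ ^ 3 / 6 := by
  set v := y - x
  have hline : ∀ t : ℝ, HasDerivAt (fun t => x + t • v) v t := fun t => by
    simpa using ((hasDerivAt_id t).smul_const v).const_add x
  have hD1 : ∀ t, HasDerivAt (fun t => f (x + t • v)) (fderiv ℝ f (x + t • v) v) t :=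
    fun t => ((hf.differentiable (by norm_num)) _).hasFDerivAt.comp_hasDerivAt t (hline t)
  have hD2 : ∀ t, HasDerivAt (fun t => fderiv ℝ f (x + t • v) v)
      (iteratedFDeriv ℝ 2 f (x + t • v) ![v, v]) t := fun t => by
    rw [iteratedFDeriv_two_apply]
    simpa using (((hf.fderiv_right (m := 1) (by norm_num)).differentiable (by norm_num)
      _).hasFDerivAt.comp_hasDerivAt t (hline t)).clm_apply (hasDerivAt_const t v)
  have bound : ∀ t ∈ Icc (0 : ℝ) 1, ‖iteratedFDeriv ℝ 2 f (x + t • v) ![v, v]‖ ≤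
      ‖iteratedFDeriv ℝ 2 f x‖ * ‖v‖ ^ 2 + γ * ‖v‖ ^ 3 * t := by
    intro t ht
    calc ‖iteratedFDeriv ℝ 2 f (x + t • v) ![v, v]‖
        ≤ ‖iteratedFDeriv ℝ 2 f (x + t • v)‖ * ‖v‖ ^ 2 :=
          (iteratedFDeriv ℝ 2 f _).le_opNorm_mul_pow_of_le (by simp [pi_norm_le_iff_of_nonneg])
      _ ≤ (‖iteratedFDeriv ℝ 2 f x‖ + γ * (t * ‖v‖)) * ‖v‖ ^ 2 := by
          gcongr
          refine (norm_le_norm_add_norm_sub' _ _).trans (add_le_add_right ?_ _)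
          simpa [norm_smul, abs_of_nonneg ht.1] using hLip (x + t • v)
      _ = ‖iteratedFDeriv ℝ 2 f x‖ * ‖v‖ ^ 2 + γ * ‖v‖ ^ 3 * t := by ring
  have := norm_sub_sub_deriv_le_of_norm_deriv2_le hD1 hD2 bound
  simp only [one_smul, zero_smul, add_zero, add_sub_cancel, v] at this
  linarith

end Taylor

theorem sage_lp_feasible_general
    {D : ℕ}
    (f : EuclideanSpace ℝ (Fin D) → ℝ)
    (hf : ContDiff ℝ 2 f)
    (γH : ℝ) (hγH : 0 ≤ γH)
    (hLip : ∀ x₁ x₂ : EuclideanSpace ℝ (Fin D),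
      ‖iteratedFDeriv ℝ 2 f x₁ - iteratedFDeriv ℝ 2 f x₂‖ ≤ γH * ‖x₁ - x₂‖)
    (X : Finset (EuclideanSpace ℝ (Fin D)))
    (xi : EuclideanSpace ℝ (Fin D)) :
    ∃ (g : EuclideanSpace ℝ (Fin D)) (h γ : ℝ), 0 ≤ h ∧ 0 ≤ γ ∧
      g = gradient f xi ∧ h = ‖iteratedFDeriv ℝ 2 f xi‖ ∧ γ = γH ∧
      ∀ xj ∈ X, xj ≠ xi →
        ((inner ℝ g ((‖xj - xi‖)⁻¹ • (xj - xi)) : ℝ) -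
            (1 / 2) * ‖xj - xi‖ * h - (1 / 6) * ‖xj - xi‖ ^ 2 * γ ≤
          (f xj - f xi) / ‖xj - xi‖) ∧
        (-(inner ℝ g ((‖xj - xi‖)⁻¹ • (xj - xi)) : ℝ) -
            (1 / 2) * ‖xj - xi‖ * h - (1 / 6) * ‖xj - xi‖ ^ 2 * γ ≤
          -((f xj - f xi) / ‖xj - xi‖)) := by
  refine ⟨gradient f xi, _, γH, norm_nonneg _, hγH, rfl, rfl, rfl, fun xj _ hne => ?_⟩
  have hμ : 0 < ‖xj - xi‖ := norm_pos_iff.2 (sub_ne_zero.2 hne)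
  have hTaylor := norm_sub_sub_fderiv_le_of_lipschitz_iteratedFDeriv_two hf (y := xj)
    fun z => hLip z xi
  rw [← toDual_gradient, InnerProductSpace.toDual_apply_apply, Real.norm_eq_abs] at hTaylor
  have hscaled : |(f xj - f xi) / ‖xj - xi‖ - inner ℝ (gradient f xi) (xj - xi) / ‖xj - xi‖| ≤
      1 / 2 * ‖xj - xi‖ * ‖iteratedFDeriv ℝ 2 f xi‖ + 1 / 6 * ‖xj - xi‖ ^ 2 * γH := by
    rw [← sub_div, abs_div, abs_of_pos hμ, div_le_iff₀ hμ]
    exact hTaylor.trans_eq (by ring)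
  rw [real_inner_smul_right, ← div_eq_inv_mul]
  constructor <;> linarith [abs_le.1 hscaled]

/-- Nonemptiness of the feasible region of the gradient-estimation
linear program (noiseless case). -/
theorem sage_lp_feasible
    {D : ℕ} (hD : 1 ≤ D)
    (f : EuclideanSpace ℝ (Fin D) → ℝ)
    (hf : ContDiff ℝ 2 f)
    (γH : ℝ) (hγH : 0 ≤ γH)
    (hLip : ∀ x₁ x₂ : EuclideanSpace ℝ (Fin D),
      ‖iteratedFDeriv ℝ 2 f x₁ - iteratedFDeriv ℝ 2 f x₂‖ ≤ γH * ‖x₁ - x₂‖)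
    (X : Finset (EuclideanSpace ℝ (Fin D)))
    (xi : EuclideanSpace ℝ (Fin D)) (hxi : xi ∈ X) :
    ∃ (g : EuclideanSpace ℝ (Fin D)) (h γ : ℝ), 0 ≤ h ∧ 0 ≤ γ ∧
      g = gradient f xi ∧ h = ‖iteratedFDeriv ℝ 2 f xi‖ ∧ γ = γH ∧
      ∀ xj ∈ X, xj ≠ xi →
        ((inner ℝ g ((‖xj - xi‖)⁻¹ • (xj - xi)) : ℝ) -
            (1 / 2) * ‖xj - xi‖ * h - (1 / 6) * ‖xj - xi‖ ^ 2 * γ ≤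
          (f xj - f xi) / ‖xj - xi‖) ∧
        (-(inner ℝ g ((‖xj - xi‖)⁻¹ • (xj - xi)) : ℝ) -
            (1 / 2) * ‖xj - xi‖ * h - (1 / 6) * ‖xj - xi‖ ^ 2 * γ ≤
          -((f xj - f xi) / ‖xj - xi‖)) :=
  sage_lp_feasible_general f hf γH hγH hLip X xi
end

section
/- For constants H ≥ 0, γ ≥ 0 with H + γ > 0, the theoretical best achievable uncertainty bound is strictly increasing in the noise bound: if 0 < ε̄₁ < ε̄₂, and μ₁*, μ₂* > 0 are the respective positive roots of (1/3)·γ·μ³ + (1/2)·H·μ² − 2ε̄ₖ = 0, then H·μ₁* + (1/2)·γ·μ₁*² < H·μ₂* + (1/2)·γ·μ₂*². -/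
/-- The best achievable uncertainty bound is strictly increasing
in the noise bound. -/
theorem sage_best_uncertainty_monotone_in_noise
    (H γ : ℝ) (hH : 0 ≤ H) (hγ : 0 ≤ γ) (hHγ : 0 < H + γ)
    (εbar₁ εbar₂ μstar₁ μstar₂ : ℝ)
    (hε₁ : 0 < εbar₁) (hε₁₂ : εbar₁ < εbar₂)
    (hμ₁ : 0 < μstar₁) (hμ₂ : 0 < μstar₂)
    (hroot₁ : (1 / 3) * γ * μstar₁ ^ 3 + (1 / 2) * H * μstar₁ ^ 2 - 2 * εbar₁ = 0)
    (hroot₂ : (1 / 3) * γ * μstar₂ ^ 3 + (1 / 2) * H * μstar₂ ^ 2 - 2 * εbar₂ = 0) :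
    H * μstar₁ + (1 / 2) * γ * μstar₁ ^ 2 <
      H * μstar₂ + (1 / 2) * γ * μstar₂ ^ 2 := by
  have hlt : μstar₁ < μstar₂ := by
    by_contra h
    push_neg at h
    nlinarith [mul_nonneg hγ (mul_nonneg hμ₂.le hμ₂.le), mul_nonneg hH hμ₂.le,
      sq_nonneg (μstar₁ + μstar₂), sq_nonneg (μstar₁ - μstar₂),
      mul_nonneg (mul_nonneg hγ (sub_nonneg.2 h)) (sq_nonneg (μstar₁ + μstar₂)),
      mul_nonneg (mul_nonneg hH (sub_nonneg.2 h)) (add_pos hμ₁ hμ₂).le]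
  rcases lt_or_eq_of_le hH with hHpos | hH0
  · nlinarith [mul_nonneg hγ (mul_nonneg (sub_nonneg.2 hlt.le) (add_pos hμ₁ hμ₂).le)]
  · have hγpos : 0 < γ := by linarith
    nlinarith [mul_pos hγpos (mul_pos (sub_pos.2 hlt) (add_pos hμ₁ hμ₂))]
end
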